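/- Let n and b be nonzero integers, let g = gcd(n, b), q_n = n/g, q_b = b/g. If z₁, z₂ ∈ 𝕋 satisfy z₁ⁿ = z₂ᵇ, then there exist z, ω ∈ 𝕋 with ω^b = 1 such that z₁ = z^{q_b} and z₂ = ω · z^{q_n}. -/

import Mathlib

lemma circle_exp_zpow (x : ℝ) (m : ℤ) : Circle.exp x ^ m = Circle.exp (m * x) := by
  have h := map_zsmul Circle.expHom m x
  simpa [zsmul_eq_mul] using congrArg Additive.toMul h.symm

/-- For nonzero integers `n, b` with `g = gcd(n, b)`, `q_n = n / g`, `q_b = b / g`: if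
`z₁, z₂ ∈ 𝕋` satisfy `z₁ ^ n = z₂ ^ b`, then there exist `z, ω ∈ 𝕋` with `ω ^ b = 1` such that
`z₁ = z ^ q_b` and `z₂ = ω * z ^ q_n`. -/
theorem statement_8 (n b : ℤ) (hn : n ≠ 0) (hb : b ≠ 0) (z₁ z₂ : Circle)
    (h : z₁ ^ n = z₂ ^ b) :
    ∃ z ω : Circle, ω ^ b = 1 ∧ z₁ = z ^ (b / (Int.gcd n b : ℤ)) ∧
      z₂ = ω * z ^ (n / (Int.gcd n b : ℤ)) := by
  set g : ℤ := (Int.gcd n b : ℤ) with hg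
  have hg0 : g ≠ 0 := by
    simp only [hg, ne_eq, Int.natCast_eq_zero, Int.gcd_eq_zero_iff]
    tauto
  obtain ⟨qn, hqn⟩ : g ∣ n := Int.gcd_dvd_left ..
  obtain ⟨qb, hqb⟩ : g ∣ b := Int.gcd_dvd_right ..
  have hn' : n / g = qn := by rw [hqn, Int.mul_ediv_cancel_left _ hg0]
  have hb' : b / g = qb := by rw [hqb, Int.mul_ediv_cancel_left _ hg0]
  have hqb0 : b / g ≠ 0 := by
    rw [hb']; rintro rfl; exact hb (by simp [hqb])
  set z : Circle := Circle.exp (Complex.arg z₁ / (b / g : ℤ)) with hz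
  have hz1 : z ^ (b / g) = z₁ := by
    rw [hz, circle_exp_zpow, mul_div_cancel₀, Circle.exp_arg]
    exact_mod_cast hqb0
  refine ⟨z, z₂ * (z ^ (n / g))⁻¹, ?_, hz1.symm, by group⟩
  have key : (z ^ (n / g)) ^ b = z₂ ^ b := by
    rw [← zpow_mul, show n / g * b = b / g * n by rw [hn', hb', hqn, hqb]; ring,
      zpow_mul, hz1, h]
  rw [mul_zpow, inv_zpow, key, mul_inv_cancel]
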